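/- If the border rank of the tensor T_{BCLRS,m} is at most r and the border rank of T_{BCLRS,m'} is at most r', then, setting n = m + m' − 1, the border rank of the matrix multiplication tensor M_{⟨n,2,2⟩} is at most r + r'. -/

import Mathlib

/-- A simple (rank-one) tensor in coordinates: `(u ⊗ v ⊗ w)_{ijk} = u_i v_j w_k`. -/
def simpleTensor {ι₁ ι₂ ι₃ : Type} (u : ι₁ → ℂ) (v : ι₂ → ℂ) (w : ι₃ → ℂ) :
    ι₁ → ι₂ → ι₃ → ℂ :=
  fun i j k => u i * v j * w k

/-- The set of tensors of rank at most `r`: sums of `r` simple tensors. -/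
def rankAtMost (ι₁ ι₂ ι₃ : Type) (r : ℕ) : Set (ι₁ → ι₂ → ι₃ → ℂ) :=
  {T | ∃ u : Fin r → ι₁ → ℂ, ∃ v : Fin r → ι₂ → ℂ, ∃ w : Fin r → ι₃ → ℂ,
    T = ∑ s : Fin r, simpleTensor (u s) (v s) (w s)}

/-- The border rank of a tensor: the least `r` such that `T` lies in the closure of the
set of tensors of rank at most `r`. -/
noncomputable def borderRank {ι₁ ι₂ ι₃ : Type} (T : ι₁ → ι₂ → ι₃ → ℂ) : ℕ :=
  sInf {r : ℕ | T ∈ closure (rankAtMost ι₁ ι₂ ι₃ r)}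

/-- The matrix multiplication tensor `M_{⟨n,m,p⟩} = ∑ x^i_j ⊗ y^j_k ⊗ z^k_i`
in coordinates: the first factor is indexed by pairs `(i,j)`, the second by `(j,k)`,
the third by `(k,i)`. -/
def matMulTensor (n m p : ℕ) :
    (Fin n × Fin m) → (Fin m × Fin p) → (Fin p × Fin n) → ℂ :=
  fun x y z => if x.2 = y.1 ∧ y.2 = z.1 ∧ z.2 = x.1 then 1 else 0

/-- The BCLRS tensor `T_{BCLRS,m} = M_{⟨m,2,2⟩} − x^1_1 ⊗ (y^1_1 ⊗ z^1_1 + y^1_2 ⊗ z^2_1)`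
(indices written 1-based in the literature, 0-based here). -/
def TBCLRS (m : ℕ) : (Fin m × Fin 2) → (Fin 2 × Fin 2) → (Fin 2 × Fin m) → ℂ :=
  fun x y z =>
    matMulTensor m 2 2 x y z -
      (if x.1.val = 0 ∧ x.2.val = 0 then 1 else 0) *
        ((if y.1.val = 0 ∧ y.2.val = 0 then 1 else 0) *
            (if z.1.val = 0 ∧ z.2.val = 0 then 1 else 0) +
          (if y.1.val = 0 ∧ y.2.val = 1 then 1 else 0) *
            (if z.1.val = 1 ∧ z.2.val = 0 then 1 else 0))

/-!
`T_{BCLRS,m}` is `M_{⟨m,2,2⟩}` with the summands through `x^1_1` removed. Restricting along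
coordinate maps does not increase border rank, and border rank is subadditive. Place a copy of
`T_{BCLRS,m}` on rows `1, …, m` of `M_{⟨n,2,2⟩}`: it covers everything except the summands
through `x^1_1`. Then place a copy of `T_{BCLRS,m'}` on rows `1, m+1, …, n`, with the two inner
indices exchanged: its missing summands are those through `x^1_2`, so it covers exactly the
complement. If `m` or `m'` is `0`, deleting the first row of the other BCLRS tensor already
gives `M_{⟨n,2,2⟩}`.
-/

section Rank

variable {ι₁ ι₂ ι₃ : Type}

lemma rankAtMost_add {r₁ r₂ : ℕ} {T₁ T₂ : ι₁ → ι₂ → ι₃ → ℂ}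
    (h₁ : T₁ ∈ rankAtMost ι₁ ι₂ ι₃ r₁) (h₂ : T₂ ∈ rankAtMost ι₁ ι₂ ι₃ r₂) :
    T₁ + T₂ ∈ rankAtMost ι₁ ι₂ ι₃ (r₁ + r₂) := by
  obtain ⟨u₁, v₁, w₁, rfl⟩ := h₁
  obtain ⟨u₂, v₂, w₂, rfl⟩ := h₂
  refine ⟨Fin.append u₁ u₂, Fin.append v₁ v₂, Fin.append w₁ w₂, ?_⟩
  simp [Fin.sum_univ_add]

lemma zero_mem_rankAtMost (r : ℕ) : (0 : ι₁ → ι₂ → ι₃ → ℂ) ∈ rankAtMost ι₁ ι₂ ι₃ r :=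
  ⟨0, 0, 0, by ext; simp [simpleTensor]⟩

lemma rankAtMost_mono {r₁ r₂ : ℕ} (h : r₁ ≤ r₂) :
    rankAtMost ι₁ ι₂ ι₃ r₁ ⊆ rankAtMost ι₁ ι₂ ι₃ r₂ := fun T hT => by
  simpa [Nat.add_sub_cancel' h] using rankAtMost_add hT (zero_mem_rankAtMost (r₂ - r₁))

lemma sum_simpleTensor_mem_rankAtMost {κ : Type} [Fintype κ] (u : κ → ι₁ → ℂ)
    (v : κ → ι₂ → ℂ) (w : κ → ι₃ → ℂ) :
    ∑ s, simpleTensor (u s) (v s) (w s) ∈ rankAtMost ι₁ ι₂ ι₃ (Fintype.card κ) := by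
  let e := (Fintype.equivFin κ).symm
  exact ⟨u ∘ e, v ∘ e, w ∘ e, (e.sum_comp fun s => simpleTensor (u s) (v s) (w s)).symm⟩

lemma mem_rankAtMost_card [Fintype ι₁] [Fintype ι₂] [DecidableEq ι₁] [DecidableEq ι₂]
    (T : ι₁ → ι₂ → ι₃ → ℂ) : T ∈ rankAtMost ι₁ ι₂ ι₃ (Fintype.card (ι₁ × ι₂)) := by
  convert sum_simpleTensor_mem_rankAtMost (fun p : ι₁ × ι₂ => Pi.single p.1 1)
    (fun p => Pi.single p.2 1) (fun p => T p.1 p.2)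
  ext a b c
  simp [simpleTensor, Finset.sum_apply, Pi.single_apply, Fintype.sum_prod_type]

lemma borderRank_le_iff [Finite ι₁] [Finite ι₂] {T : ι₁ → ι₂ → ι₃ → ℂ} {r : ℕ} :
    borderRank T ≤ r ↔ T ∈ closure (rankAtMost ι₁ ι₂ ι₃ r) := by
  refine ⟨fun h => ?_, fun h => Nat.sInf_le h⟩
  have := Fintype.ofFinite ι₁
  have := Fintype.ofFinite ι₂
  classical
  have hne : {r | T ∈ closure (rankAtMost ι₁ ι₂ ι₃ r)}.Nonempty :=
    ⟨_, subset_closure (mem_rankAtMost_card T)⟩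
  exact closure_mono (rankAtMost_mono h) (Nat.sInf_mem hne)

lemma add_mem_closure_rankAtMost {r₁ r₂ : ℕ} {T₁ T₂ : ι₁ → ι₂ → ι₃ → ℂ}
    (h₁ : T₁ ∈ closure (rankAtMost ι₁ ι₂ ι₃ r₁))
    (h₂ : T₂ ∈ closure (rankAtMost ι₁ ι₂ ι₃ r₂)) :
    T₁ + T₂ ∈ closure (rankAtMost ι₁ ι₂ ι₃ (r₁ + r₂)) :=
  map_mem_closure₂ continuous_add h₁ h₂ fun _ ha _ hb => rankAtMost_add ha hb

end Rank

section Restriction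

variable {ι₁ ι₂ ι₃ κ₁ κ₂ κ₃ : Type}

-- The restriction `(A ⊗ B ⊗ C) T`, where `A u = fun a => (f₁ a).elim 0 u`, and similarly for
-- `B` and `C`.
def restrictAlong (f₁ : ι₁ → Option κ₁) (f₂ : ι₂ → Option κ₂) (f₃ : ι₃ → Option κ₃)
    (T : κ₁ → κ₂ → κ₃ → ℂ) : ι₁ → ι₂ → ι₃ → ℂ :=
  fun a b c => (f₁ a).elim 0 fun a' => (f₂ b).elim 0 fun b' => (f₃ c).elim 0 (T a' b')

variable (f₁ : ι₁ → Option κ₁) (f₂ : ι₂ → Option κ₂) (f₃ : ι₃ → Option κ₃)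

lemma restrictAlong_simpleTensor (u : κ₁ → ℂ) (v : κ₂ → ℂ) (w : κ₃ → ℂ) :
    restrictAlong f₁ f₂ f₃ (simpleTensor u v w) =
      simpleTensor (fun a => (f₁ a).elim 0 u) (fun b => (f₂ b).elim 0 v)
        (fun c => (f₃ c).elim 0 w) := by
  ext a b c
  simp only [restrictAlong, simpleTensor]
  cases f₁ a <;> cases f₂ b <;> cases f₃ c <;> simp [simpleTensor]

lemma restrictAlong_sum {κ : Type} (s : Finset κ) (T : κ → κ₁ → κ₂ → κ₃ → ℂ) :
    restrictAlong f₁ f₂ f₃ (∑ i ∈ s, T i) = ∑ i ∈ s, restrictAlong f₁ f₂ f₃ (T i) := by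
  ext a b c
  simp only [restrictAlong, Finset.sum_apply]
  cases f₁ a <;> cases f₂ b <;> cases f₃ c <;> simp

lemma restrictAlong_mem_rankAtMost {r : ℕ} {T : κ₁ → κ₂ → κ₃ → ℂ}
    (h : T ∈ rankAtMost κ₁ κ₂ κ₃ r) : restrictAlong f₁ f₂ f₃ T ∈ rankAtMost ι₁ ι₂ ι₃ r := by
  obtain ⟨u, v, w, rfl⟩ := h
  simp only [restrictAlong_sum, restrictAlong_simpleTensor]
  exact ⟨_, _, _, rfl⟩

lemma continuous_restrictAlong : Continuous (restrictAlong f₁ f₂ f₃ (κ₃ := κ₃)) := by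
  refine continuous_pi fun a => continuous_pi fun b => continuous_pi fun c => ?_
  simp only [restrictAlong]
  cases f₁ a <;> cases f₂ b <;> cases f₃ c <;> simp only [Option.elim] <;> fun_prop

lemma restrictAlong_mem_closure_rankAtMost {r : ℕ} {T : κ₁ → κ₂ → κ₃ → ℂ}
    (h : T ∈ closure (rankAtMost κ₁ κ₂ κ₃ r)) :
    restrictAlong f₁ f₂ f₃ T ∈ closure (rankAtMost ι₁ ι₂ ι₃ r) :=
  map_mem_closure (continuous_restrictAlong f₁ f₂ f₃) h
    fun _ => restrictAlong_mem_rankAtMost f₁ f₂ f₃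

end Restriction

section MatMul

variable {n n' m p : ℕ}

def restrictRows (σ : Fin n → Option (Fin n')) (τ : Equiv.Perm (Fin m)) :
    ((Fin n' × Fin m) → (Fin m × Fin p) → (Fin p × Fin n') → ℂ) →
      (Fin n × Fin m) → (Fin m × Fin p) → (Fin p × Fin n) → ℂ :=
  restrictAlong (fun x => (σ x.1).map (·, τ x.2)) (fun y => some (τ y.1, y.2))
    (fun z => (σ z.2).map (z.1, ·))

-- `S.indicator (matMulTensor n m p)` is `∑_{(i,j) ∈ S} x^i_j ⊗ ∑_k y^j_k ⊗ z^k_i`.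
lemma restrictRows_indicator_matMulTensor (σ : Fin n → Option (Fin n'))
    (hσ : ∀ {i i' a}, σ i = some a → σ i' = some a → i = i') (τ : Equiv.Perm (Fin m))
    (S : Set (Fin n' × Fin m)) :
    restrictRows σ τ (S.indicator (matMulTensor n' m p)) =
      {x | ∃ a, σ x.1 = some a ∧ (a, τ x.2) ∈ S}.indicator (matMulTensor n m p) := by
  ext ⟨i, j⟩ ⟨j', k⟩ ⟨k', i'⟩
  simp only [restrictRows, restrictAlong, Set.indicator, ite_apply, Pi.zero_apply]
  cases ha : σ i with
  | none => simp [ha]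
  | some a =>
    cases hc : σ i' with
    | none =>
      have hrow : i' ≠ i := fun h => by simp [h, ha] at hc
      simp [matMulTensor, hrow]
    | some c =>
      have hrow : c = a ↔ i' = i :=
        ⟨fun h => hσ hc (h ▸ ha), fun h => Option.some_injective _ (hc.symm.trans (h ▸ ha))⟩
      by_cases hS : (a, τ j) ∈ S <;>
        simp [hS, ha, ite_apply, matMulTensor, hrow, τ.injective.eq_iff]

end MatMul

lemma TBCLRS_eq_indicator (m : ℕ) :
    TBCLRS m = {x | (x.1 : ℕ) = 0 ∧ (x.2 : ℕ) = 0}ᶜ.indicator (matMulTensor m 2 2) := by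
  ext ⟨i, j⟩ ⟨j', k⟩ ⟨k', i'⟩
  simp only [TBCLRS, matMulTensor, Set.indicator, ite_apply, Pi.zero_apply, Fin.ext_iff]
  split_ifs <;> simp_all <;> omega

def dropFirstRow (m : ℕ) : Fin (m - 1) → Option (Fin m) :=
  fun i => some ⟨i + 1, by omega⟩

def firstRows (m n : ℕ) : Fin n → Option (Fin m) :=
  fun i => if h : (i : ℕ) < m then some ⟨i, h⟩ else none

def firstAndLastRows (m m' : ℕ) (hm' : 0 < m') : Fin (m + m' - 1) → Option (Fin m') :=
  fun i =>
    if (i : ℕ) = 0 then some ⟨0, hm'⟩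
    else if h : m ≤ i then some ⟨i - m + 1, by omega⟩ else none

lemma matMulTensor_pred_eq_restrictRows_TBCLRS (m : ℕ) :
    matMulTensor (m - 1) 2 2 = restrictRows (dropFirstRow m) 1 (TBCLRS m) := by
  rw [TBCLRS_eq_indicator, restrictRows_indicator_matMulTensor]
  · convert (Set.indicator_univ _).symm
    ext x
    simp [dropFirstRow]
  · simp [dropFirstRow]
    omega

lemma matMulTensor_eq_restrictRows_TBCLRS_add (m m' : ℕ) (hm : 0 < m) (hm' : 0 < m') :
    matMulTensor (m + m' - 1) 2 2 =
      restrictRows (firstRows m _) 1 (TBCLRS m) +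
        restrictRows (firstAndLastRows m m' hm') (Equiv.swap 0 1) (TBCLRS m') := by
  rw [TBCLRS_eq_indicator, TBCLRS_eq_indicator, restrictRows_indicator_matMulTensor,
    restrictRows_indicator_matMulTensor]
  -- The first row is split between the two copies by its column; no other row is shared.
  · symm
    convert Set.indicator_self_add_compl _ (matMulTensor (m + m' - 1) 2 2) using 2
    congr 1
    ext ⟨i, j⟩
    simp [firstRows, firstAndLastRows]
    split_ifs <;> fin_cases j <;> simp_all
  · intro i i' a
    simp only [firstAndLastRows]
    split_ifs <;> simp [Fin.ext_iff] <;> omega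
  · intro i i' a
    simp only [firstRows]
    split_ifs <;> simp [Fin.ext_iff]
    omega

lemma borderRank_matMulTensor_pred_le {m r : ℕ} (h : borderRank (TBCLRS m) ≤ r) :
    borderRank (matMulTensor (m - 1) 2 2) ≤ r := by
  rw [borderRank_le_iff] at h ⊢
  rw [matMulTensor_pred_eq_restrictRows_TBCLRS]
  exact restrictAlong_mem_closure_rankAtMost _ _ _ h

theorem borderRank_matMul_le_of_BCLRS (m m' r r' : ℕ)
    (h : borderRank (TBCLRS m) ≤ r) (h' : borderRank (TBCLRS m') ≤ r') :
    borderRank (matMulTensor (m + m' - 1) 2 2) ≤ r + r' := by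
  rcases Nat.eq_zero_or_pos m with rfl | hm
  · rw [Nat.zero_add]
    exact (borderRank_matMulTensor_pred_le h').trans (Nat.le_add_left r' r)
  rcases Nat.eq_zero_or_pos m' with rfl | hm'
  · rw [Nat.add_zero]
    exact (borderRank_matMulTensor_pred_le h).trans (Nat.le_add_right r r')
  rw [borderRank_le_iff] at h h' ⊢
  rw [matMulTensor_eq_restrictRows_TBCLRS_add m m' hm hm']
  exact add_mem_closure_rankAtMost (restrictAlong_mem_closure_rankAtMost _ _ _ h)
    (restrictAlong_mem_closure_rankAtMost _ _ _ h')
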